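/- arXiv:math/0312379 — 3 statements merged into one kernel-verified Lean document; each statement's English description precedes it below -/
import Mathlib

section
/- Let B₆ be the Artin braid group on 6 strands with generators σ₁, …, σ₅. In the quotient group B₆/⟨⟨σ₃σ₄σ₅²σ₄σ₃σ₂σ₁²σ₂⟩⟩ (quotient by the normal closure of the single element σ₃σ₄σ₅²σ₄σ₃σ₂σ₁²σ₂), the identity σ₂⁻¹σ₁⁻²σ₂⁻¹σ₃σ₂σ₁²σ₂ = σ₄⁻¹σ₅⁻²σ₄⁻¹σ₃σ₄σ₅²σ₄ holds. -/
/-- The braid relations on `n` generators `σ₁, …, σₙ` (indexed by `Fin n`):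
commutation `σᵢσⱼ = σⱼσᵢ` for `|i−j| ≥ 2` and `σᵢσᵢ₊₁σᵢ = σᵢ₊₁σᵢσᵢ₊₁`. -/
def braidRels (n : ℕ) : Set (FreeGroup (Fin n)) :=
  {r | ∃ i j : Fin n, (i : ℕ) + 2 ≤ (j : ℕ) ∧
      r = FreeGroup.of i * FreeGroup.of j * (FreeGroup.of i)⁻¹ * (FreeGroup.of j)⁻¹} ∪
  {r | ∃ i j : Fin n, (j : ℕ) = (i : ℕ) + 1 ∧
      r = FreeGroup.of i * FreeGroup.of j * FreeGroup.of i *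
        (FreeGroup.of j * FreeGroup.of i * FreeGroup.of j)⁻¹}

/-- The Artin braid group `B₆` on 6 strands (5 generators). -/
abbrev B6 : Type := PresentedGroup (braidRels 5)

/-- The standard generators `σ₁, …, σ₅` of `B₆` (indexed by `Fin 5`, so `σⱼ₊₁ = g j`). -/
def g (i : Fin 5) : B6 := PresentedGroup.of i


/-!
Write `a, b, c` for `σ₃, σ₄, σ₅`, `Y = b c² b` and `X = σ₂σ₁²σ₂`. The extra relation says
`X = (a Y a)⁻¹`, so `X⁻¹ a X = Y⁻¹ a Y` is equivalent to `a Y a Y = Y a Y a`. This uses only the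
braid relations among `a, b, c`: both sides reduce to `b a W a b` with `W = b c² b c²`,
resp. `W = c² b c² b`, and these agree because both equal `(b c)³`.
-/

section BraidIdentities

variable {G : Type*} [Group G] {a b c d : G}

theorem Commute.mul_sandwich_swap (had : Commute a d) :
    d * (a * b * a) * d = a * (d * b * d) * a := by
  calc d * (a * b * a) * d = d * a * b * (a * d) := by simp only [mul_assoc]
    _ = a * d * b * (d * a) := by rw [had.eq]
    _ = a * (d * b * d) * a := by simp only [mul_assoc]

theorem commute_mul_sq_mul_sq_of_braid (hbc : b * c * b = c * b * c) :
    Commute (b * c ^ 2 * b) (c ^ 2) := by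
  show b * c ^ 2 * b * c ^ 2 = c ^ 2 * (b * c ^ 2 * b)
  calc b * c ^ 2 * b * c ^ 2 = b * c * (c * b * c) * c := by simp only [pow_two, mul_assoc]
    _ = b * c * (b * c * b) * c := by rw [hbc]
    _ = (b * c * b) * (c * b * c) := by simp only [mul_assoc]
    _ = (c * b * c) * (c * b * c) := by rw [hbc]
    _ = (c * b * c) * (b * c * b) := by rw [hbc]
    _ = c * (b * c * b) * c * b := by simp only [mul_assoc]
    _ = c * (c * b * c) * c * b := by rw [hbc]
    _ = c ^ 2 * (b * c ^ 2 * b) := by simp only [pow_two, mul_assoc]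

theorem braid_four_of_braid (hab : a * b * a = b * a * b) (had : Commute a d)
    (hbd : Commute (b * d * b) d) :
    a * (b * d * b) * a * (b * d * b) = (b * d * b) * a * (b * d * b) * a := by
  have hsandwich := had.mul_sandwich_swap (b := b)
  calc a * (b * d * b) * a * (b * d * b)
      = a * b * (d * (b * a * b) * d) * b := by simp only [mul_assoc]
    _ = a * b * a * (d * b * d) * a * b := by
      rw [← hab, hsandwich]; simp only [mul_assoc]
    _ = b * a * (b * d * b * d) * a * b := by rw [hab]; simp only [mul_assoc]
    _ = b * a * (d * b * d) * (b * a * b) := by rw [hbd.eq]; simp only [mul_assoc]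
    _ = b * (d * (b * a * b) * d) * b * a := by
      rw [← hab, hsandwich]; simp only [mul_assoc]
    _ = (b * d * b) * a * (b * d * b) * a := by simp only [mul_assoc]

theorem inv_mul_mul_eq_of_braid (x : G) (hab : a * b * a = b * a * b)
    (hbc : b * c * b = c * b * c) (hac : Commute a c)
    (hx : a * (b * c ^ 2 * b) * a * x = 1) :
    x⁻¹ * a * x = (b * c ^ 2 * b)⁻¹ * a * (b * c ^ 2 * b) := by
  set Y := b * c ^ 2 * b
  have hfour : a * Y * a * Y = Y * a * Y * a :=
    braid_four_of_braid hab (hac.pow_right 2) (commute_mul_sq_mul_sq_of_braid hbc)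
  rw [eq_inv_of_mul_eq_one_right hx, inv_inv]
  calc a * Y * a * a * (a * Y * a)⁻¹ = Y⁻¹ * (Y * a * Y * a) * a * (a * Y * a)⁻¹ := by group
    _ = Y⁻¹ * (a * Y * a * Y) * a * (a * Y * a)⁻¹ := by rw [hfour]
    _ = Y⁻¹ * a * Y := by group

end BraidIdentities

theorem PresentedGroup.braidRels_commute {n : ℕ} {i j : Fin n} (hij : (i : ℕ) + 2 ≤ j) :
    Commute (of i : PresentedGroup (braidRels n)) (of j) :=
  mk_eq_mk_of_mul_inv_mem (Or.inl ⟨i, j, hij, by group⟩)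

theorem PresentedGroup.braidRels_braid {n : ℕ} {i j : Fin n} (hij : (j : ℕ) = i + 1) :
    (of i * of j * of i : PresentedGroup (braidRels n)) = of j * of i * of j :=
  mk_eq_mk_of_mul_inv_mem (Or.inr ⟨i, j, hij, rfl⟩)

/-- In `B₆/⟨⟨σ₃σ₄σ₅²σ₄σ₃σ₂σ₁²σ₂⟩⟩`, the identity
`σ₂⁻¹σ₁⁻²σ₂⁻¹σ₃σ₂σ₁²σ₂ = σ₄⁻¹σ₅⁻²σ₄⁻¹σ₃σ₄σ₅²σ₄` holds. -/
theorem stmt3 :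
    QuotientGroup.mk (s := Subgroup.normalClosure
        {g 2 * g 3 * g 4 ^ 2 * g 3 * g 2 * g 1 * g 0 ^ 2 * g 1})
      ((g 1)⁻¹ * (g 0 ^ 2)⁻¹ * (g 1)⁻¹ * g 2 * g 1 * g 0 ^ 2 * g 1) =
    QuotientGroup.mk (s := Subgroup.normalClosure
        {g 2 * g 3 * g 4 ^ 2 * g 3 * g 2 * g 1 * g 0 ^ 2 * g 1})
      ((g 3)⁻¹ * (g 4 ^ 2)⁻¹ * (g 3)⁻¹ * g 2 * g 3 * g 4 ^ 2 * g 3) := by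
  set N := Subgroup.normalClosure {g 2 * g 3 * g 4 ^ 2 * g 3 * g 2 * g 1 * g 0 ^ 2 * g 1}
  let π := QuotientGroup.mk' N
  have hR : π (g 2 * g 3 * g 4 ^ 2 * g 3 * g 2 * g 1 * g 0 ^ 2 * g 1) = 1 :=
    (QuotientGroup.eq_one_iff _).2 (Subgroup.subset_normalClosure rfl)
  have key := inv_mul_mul_eq_of_braid (a := π (g 2)) (b := π (g 3)) (c := π (g 4))
    (π (g 1 * g 0 ^ 2 * g 1))
    (by simp only [← map_mul]; exact congrArg π (PresentedGroup.braidRels_braid rfl))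
    (by simp only [← map_mul]; exact congrArg π (PresentedGroup.braidRels_braid rfl))
    ((PresentedGroup.braidRels_commute (by simp)).map π)
    (by simpa only [map_mul, map_pow, mul_assoc] using hR)
  change π _ = π _
  simp only [map_mul, map_inv, map_pow] at key ⊢
  convert key using 1 <;> group
end

section
/- Let G̃ be the group with presentation on generators Γ₁, Γ₂, Γ₃, Γ₄, Γ₅ and relations: ΓᵢΓⱼΓᵢ = ΓⱼΓᵢΓⱼ for (i,j) ∈ {(1,2),(1,3),(2,3),(2,4),(2,5),(4,5)}; ΓᵢΓⱼ = ΓⱼΓᵢ for (i,j) ∈ {(1,4),(1,5),(3,4),(3,5)}; Γ₁ commutes with both Γ₃Γ₂Γ₃⁻¹ and Γ₃⁻¹Γ₂Γ₃; Γ₄ commutes with both Γ₅Γ₂Γ₅⁻¹ and Γ₅⁻¹Γ₂Γ₅. Then in G̃ the identity Γ₁⁻¹Γ₂Γ₃⁻²Γ₁Γ₃²Γ₂⁻¹Γ₁ = Γ₂ holds. -/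
open scoped commutatorElement

/-- The defining relations of the group `G̃` on generators `Γ₁, …, Γ₅` (indexed by
`Fin 5`, where index `i` corresponds to `Γᵢ₊₁`): braid relations `ΓᵢΓⱼΓᵢ = ΓⱼΓᵢΓⱼ` for
`(i,j) ∈ {(1,2),(1,3),(2,3),(2,4),(2,5),(4,5)}`, commutation `ΓᵢΓⱼ = ΓⱼΓᵢ` for
`(i,j) ∈ {(1,4),(1,5),(3,4),(3,5)}`, `Γ₁` commutes with `Γ₃Γ₂Γ₃⁻¹` and `Γ₃⁻¹Γ₂Γ₃`,
and `Γ₄` commutes with `Γ₅Γ₂Γ₅⁻¹` and `Γ₅⁻¹Γ₂Γ₅`. -/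
def tildeRels : Set (FreeGroup (Fin 5)) :=
  let Γ : Fin 5 → FreeGroup (Fin 5) := FreeGroup.of
  { Γ 0 * Γ 1 * Γ 0 * (Γ 1 * Γ 0 * Γ 1)⁻¹,
    Γ 0 * Γ 2 * Γ 0 * (Γ 2 * Γ 0 * Γ 2)⁻¹,
    Γ 1 * Γ 2 * Γ 1 * (Γ 2 * Γ 1 * Γ 2)⁻¹,
    Γ 1 * Γ 3 * Γ 1 * (Γ 3 * Γ 1 * Γ 3)⁻¹,
    Γ 1 * Γ 4 * Γ 1 * (Γ 4 * Γ 1 * Γ 4)⁻¹,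
    Γ 3 * Γ 4 * Γ 3 * (Γ 4 * Γ 3 * Γ 4)⁻¹,
    ⁅Γ 0, Γ 3⁆, ⁅Γ 0, Γ 4⁆, ⁅Γ 2, Γ 3⁆, ⁅Γ 2, Γ 4⁆,
    ⁅Γ 0, Γ 2 * Γ 1 * (Γ 2)⁻¹⁆, ⁅Γ 0, (Γ 2)⁻¹ * Γ 1 * Γ 2⁆,
    ⁅Γ 3, Γ 4 * Γ 1 * (Γ 4)⁻¹⁆, ⁅Γ 3, (Γ 4)⁻¹ * Γ 1 * Γ 4⁆ }

/-- The group `G̃` (the quotient `B̃₆` of the braid group `B₆`). -/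
abbrev Gtilde : Type := PresentedGroup tildeRels

/-- The generators `Γ₁, …, Γ₅` of `G̃` (index `i : Fin 5` corresponds to `Γᵢ₊₁`). -/
def γ (i : Fin 5) : Gtilde := PresentedGroup.of i

/-!
Write `a, b, c` for `Γ₁, Γ₂, Γ₃`. A braid relation `xyx = yxy` says `y⁻¹xy = xyx⁻¹`, and the
commutation of `a` with `cbc⁻¹` says, after conjugating by `c⁻¹`, that `b` commutes with `c⁻¹ac`.
Inserting `b⁻¹b` and `cc⁻¹`, the word `a⁻¹bc⁻²ac²b⁻¹a` becomes the conjugate of `c⁻¹ac` by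
`a⁻¹(bcb⁻¹)⁻¹ = a⁻¹(c⁻¹bc)⁻¹`, which the braid relations turn into `c(a⁻¹(c⁻¹bc)a)c⁻¹`; this is
`b` because `a` commutes with `c⁻¹bc`.
-/

section Braid

variable {G : Type*} [Group G] {a b c : G}

theorem inv_mul_mul_eq_mul_mul_inv_of_braid (h : a * b * a = b * a * b) :
    b⁻¹ * a * b = a * b * a⁻¹ :=
  calc b⁻¹ * a * b = b⁻¹ * (b * a * b) * a⁻¹ := by rw [← h]; group
    _ = a * b * a⁻¹ := by group

theorem eq_of_braid_of_commute_conj (hab : a * b * a = b * a * b) (hac : a * c * a = c * a * c)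
    (hbc : b * c * b = c * b * c) (h₁ : Commute a (c⁻¹ * b * c)) (h₂ : Commute a (c * b * c⁻¹)) :
    a⁻¹ * b * (c ^ 2)⁻¹ * a * c ^ 2 * b⁻¹ * a = b := by
  have hb : Commute b (c⁻¹ * a * c) := by simpa [mul_assoc] using (h₂.conj c⁻¹).symm
  calc a⁻¹ * b * (c ^ 2)⁻¹ * a * c ^ 2 * b⁻¹ * a
      = a⁻¹ * (b * c * b⁻¹)⁻¹ * (b * (c⁻¹ * a * c) * b⁻¹) * (b * c * b⁻¹) * a := by
        rw [sq]; group
    _ = a⁻¹ * (c⁻¹ * b * c)⁻¹ * (c⁻¹ * a * c) * (c⁻¹ * b * c) * a := by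
      rw [hb.mul_inv_cancel, inv_mul_mul_eq_mul_mul_inv_of_braid hbc]
    _ = a⁻¹ * c⁻¹ * (b⁻¹ * a * b) * c * a := by group
    _ = (a⁻¹ * c * a)⁻¹ * b * (a⁻¹ * c * a) := by
      rw [inv_mul_mul_eq_mul_mul_inv_of_braid hab]; group
    _ = c * (a⁻¹ * (c⁻¹ * b * c) * a) * c⁻¹ := by
      rw [inv_mul_mul_eq_mul_mul_inv_of_braid hac.symm]; group
    _ = b := by rw [h₁.inv_mul_cancel]; group

end Braid

theorem PresentedGroup.commute_of_commutatorElement_mem {α : Type*} {rels : Set (FreeGroup α)}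
    {x y : FreeGroup α} (h : ⁅x, y⁆ ∈ rels) :
    Commute (PresentedGroup.mk rels x) (PresentedGroup.mk rels y) := by
  rw [← commutatorElement_eq_one_iff_commute, ← map_commutatorElement]
  exact PresentedGroup.one_of_mem h

/-- In `G̃`, the identity `Γ₁⁻¹Γ₂Γ₃⁻²Γ₁Γ₃²Γ₂⁻¹Γ₁ = Γ₂` holds. -/
theorem stmt8 :
    (γ 0)⁻¹ * γ 1 * (γ 2 ^ 2)⁻¹ * γ 0 * γ 2 ^ 2 * (γ 1)⁻¹ * γ 0 = γ 1 := by
  have hab : γ 0 * γ 1 * γ 0 = γ 1 * γ 0 * γ 1 :=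
    PresentedGroup.mk_eq_mk_of_mul_inv_mem (by simp [tildeRels])
  have hac : γ 0 * γ 2 * γ 0 = γ 2 * γ 0 * γ 2 :=
    PresentedGroup.mk_eq_mk_of_mul_inv_mem (by simp [tildeRels])
  have hbc : γ 1 * γ 2 * γ 1 = γ 2 * γ 1 * γ 2 :=
    PresentedGroup.mk_eq_mk_of_mul_inv_mem (by simp [tildeRels])
  have h₁ : Commute (γ 0) ((γ 2)⁻¹ * γ 1 * γ 2) := by
    exact PresentedGroup.commute_of_commutatorElement_mem (rels := tildeRels)
      (x := .of 0) (y := (.of 2)⁻¹ * .of 1 * .of 2) (by simp [tildeRels])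
  have h₂ : Commute (γ 0) (γ 2 * γ 1 * (γ 2)⁻¹) := by
    exact PresentedGroup.commute_of_commutatorElement_mem (rels := tildeRels)
      (x := .of 0) (y := .of 2 * .of 1 * (.of 2)⁻¹) (by simp [tildeRels])
  exact eq_of_braid_of_commute_conj hab hac hbc h₁ h₂
end

section
/- Let G̃ be the group with presentation on generators Γ₁, Γ₂, Γ₃, Γ₄, Γ₅ and relations: ΓᵢΓⱼΓᵢ = ΓⱼΓᵢΓⱼ for (i,j) ∈ {(1,2),(1,3),(2,3),(2,4),(2,5),(4,5)}; ΓᵢΓⱼ = ΓⱼΓᵢ for (i,j) ∈ {(1,4),(1,5),(3,4),(3,5)}; Γ₁ commutes with both Γ₃Γ₂Γ₃⁻¹ and Γ₃⁻¹Γ₂Γ₃; Γ₄ commutes with both Γ₅Γ₂Γ₅⁻¹ and Γ₅⁻¹Γ₂Γ₅. In the quotient of G̃ by the normal closure of the set of squares {Γ₁², Γ₂², Γ₃², Γ₄², Γ₅²}, the image of the word w = Γ₅Γ₃Γ₂Γ₄⁻¹Γ₂Γ₅⁻²Γ₄Γ₅²Γ₂⁻¹Γ₄Γ₅⁻¹Γ₄Γ₅²Γ₃Γ₂Γ₅⁻²Γ₄Γ₅²Γ₂⁻¹Γ₄Γ₂Γ₃⁻²Γ₁Γ₃²Γ₁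 is the identity element. -/
/-!
Modulo the squares every generator becomes an involution, so `w` collapses to
`Γ₅Γ₃(Γ₂Γ₄)³Γ₅Γ₄Γ₃Γ₂Γ₄Γ₂Γ₄Γ₂Γ₁²`. Two involutions satisfying the braid relation have product of
order dividing `3`, which kills `(Γ₂Γ₄)³` and, once `Γ₃` has been moved past `Γ₅` and `Γ₄`, also the
remaining `(Γ₄Γ₂)³`.
-/

open scoped commutatorElement

/-- The word `w = Γ₅Γ₃Γ₂Γ₄⁻¹Γ₂Γ₅⁻²Γ₄Γ₅²Γ₂⁻¹Γ₄Γ₅⁻¹Γ₄Γ₅²Γ₃Γ₂Γ₅⁻²Γ₄Γ₅²Γ₂⁻¹Γ₄Γ₂Γ₃⁻²Γ₁Γ₃²Γ₁`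
as an element of `G̃`. -/
def w : Gtilde :=
  γ 4 * γ 2 * γ 1 * (γ 3)⁻¹ * γ 1 * (γ 4 ^ 2)⁻¹ * γ 3 * γ 4 ^ 2 * (γ 1)⁻¹ * γ 3 *
    (γ 4)⁻¹ * γ 3 * γ 4 ^ 2 * γ 2 * γ 1 * (γ 4 ^ 2)⁻¹ * γ 3 * γ 4 ^ 2 * (γ 1)⁻¹ *
    γ 3 * γ 1 * (γ 2 ^ 2)⁻¹ * γ 0 * γ 2 ^ 2 * γ 0

section Involutions

variable {G : Type*} [Group G] {x y : G}

theorem mul_pow_three_eq_one_of_braid (hx : x ^ 2 = 1) (hy : y ^ 2 = 1)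
    (hxy : x * y * x = y * x * y) : (x * y) ^ 3 = 1 :=
  calc (x * y) ^ 3 = (x * y * x) * (y * x * y) := by rw [pow_succ, pow_two]; group
    _ = (x * y * x) * (x * y * x) := by rw [hxy]
    _ = x * y * x ^ 2 * y * x := by rw [pow_two]; group
    _ = x * y ^ 2 * x := by rw [hx, pow_two]; group
    _ = 1 := by rw [hy, mul_one, ← pow_two, hx]

theorem Commute.mul_mul_eq_of_sq_eq_one (h : Commute x y) (hy : y ^ 2 = 1) : y * x * y = x := by
  rw [← h.eq, mul_assoc, ← pow_two, hy, mul_one]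

end Involutions

theorem PresentedGroup.commute_of_commutator_mem {α : Type*} {rels : Set (FreeGroup α)} {a b : α}
    (h : ⁅FreeGroup.of a, FreeGroup.of b⁆ ∈ rels) :
    Commute (PresentedGroup.of a : PresentedGroup rels) (PresentedGroup.of b) := by
  have h₁ := PresentedGroup.one_of_mem h
  rwa [map_commutatorElement, commutatorElement_eq_one_iff_mul_comm] at h₁

theorem γ_braid_one_three : γ 1 * γ 3 * γ 1 = γ 3 * γ 1 * γ 3 :=
  PresentedGroup.mk_eq_mk_of_mul_inv_mem (by simp [tildeRels])

theorem map_w_eq_one {Q : Type*} [Group Q] (f : Gtilde →* Q) (hsq : ∀ i, f (γ i) ^ 2 = 1) :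
    f w = 1 := by
  have hinv (i : Fin 5) : (f (γ i))⁻¹ = f (γ i) :=
    inv_eq_of_mul_eq_one_right (by rw [← pow_two, hsq])
  have hbd : f (γ 1) * f (γ 3) * f (γ 1) = f (γ 3) * f (γ 1) * f (γ 3) := by
    simp only [← map_mul, γ_braid_one_three]
  have hcd : Commute (f (γ 2)) (f (γ 3)) :=
    (PresentedGroup.commute_of_commutator_mem (by simp [tildeRels])).map f
  have hce : Commute (f (γ 2)) (f (γ 4)) :=
    (PresentedGroup.commute_of_commutator_mem (by simp [tildeRels])).map f
  simp only [w, map_mul, map_inv, map_pow, hsq, hinv, inv_one, mul_one]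
  set a := f (γ 0)
  set b := f (γ 1)
  set c := f (γ 2)
  set d := f (γ 3)
  set e := f (γ 4)
  calc e * c * b * d * b * d * b * d * e * d * c * b * d * b * d * b * a * a
      = e * c * (b * d) ^ 3 * e * d * c * b * d * b * d * b * a ^ 2 := by
        simp only [pow_succ, pow_zero, one_mul]; group
    _ = (e * c * e) * d * c * b * d * b * d * b := by
        rw [mul_pow_three_eq_one_of_braid (hsq 1) (hsq 3) hbd, hsq 0]; group
    _ = (c * d * c) * b * d * b * d * b := by rw [hce.mul_mul_eq_of_sq_eq_one (hsq 4)]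
    _ = (d * b) ^ 3 := by
        rw [hcd.symm.mul_mul_eq_of_sq_eq_one (hsq 2)]
        simp only [pow_succ, pow_zero, one_mul]; group
    _ = 1 := mul_pow_three_eq_one_of_braid (hsq 3) (hsq 1) hbd.symm

/-- In the quotient of `G̃` by the normal closure of the squares of the generators,
the image of the word `w` is the identity. -/
theorem stmt10 :
    QuotientGroup.mk (s := Subgroup.normalClosure
      {x : Gtilde | ∃ i : Fin 5, x = γ i ^ 2}) w =
    (1 : Gtilde ⧸ Subgroup.normalClosure {x : Gtilde | ∃ i : Fin 5, x = γ i ^ 2}) :=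
  map_w_eq_one (QuotientGroup.mk' _) fun i =>
    (QuotientGroup.eq_one_iff _).2 (Subgroup.subset_normalClosure ⟨i, rfl⟩)
end
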